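/- For every integer k ≥ 0, the polynomial Ĥe_k has exactly k real roots, all of them simple (i.e. Ĥe_k has k distinct real zeros and its degree is k). -/

import Mathlib

/-!
Ĥe satisfies the three-term recurrence `p₀ = 1`, `p₁ = X - a₀`,
`pₙ₊₂ = (X - aₙ₊₁) pₙ₊₁ - bₙ pₙ` with `bₙ > 0`, and for every such recurrence the roots of `pₙ`
and `pₙ₊₁` are real, simple and strictly interlace. In the induction step, at the roots
`y₀ < ⋯ < yₙ` of `pₙ₊₁` we have `pₙ₊₂(yᵢ) = -bₙ pₙ(yᵢ)`, whose sign alternates because exactly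
`n - i` roots of `pₙ` exceed `yᵢ`. So `pₙ₊₂` changes sign on each `(yᵢ, yᵢ₊₁)` and, being monic
of degree `n + 2`, also on `(-∞, y₀)` and `(yₙ, ∞)`; these `n + 2` roots interlace the `yᵢ`
and, by degree, are all of them.
-/

open Polynomial

noncomputable def Hhat : ℕ → Polynomial ℝ
  | 0 => 1
  | 1 => Polynomial.X
  | (n + 2) => Polynomial.X * Hhat (n + 1) - Polynomial.C ((n : ℝ) + 3) * Hhat n

open Filter Finset

lemma Fin.strictMono_cons_snoc {α : Type*} [Preorder α] {m : ℕ} {y : Fin m → α}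
    (hy : StrictMono y) {a b : α} (ha : ∀ i, a < y i) (hb : ∀ i, y i < b) (hab : a < b) :
    StrictMono (Fin.cons a (Fin.snoc y b) : Fin (m + 2) → α) := by
  have hsnoc : StrictMono (Fin.snoc y b : Fin (m + 1) → α) := by
    rw [← Fin.insertNth_last', Fin.strictMono_insertNth_iff]
    exact ⟨hy, fun i _ => hb i, fun i h => absurd h (Fin.castSucc_lt_last i).not_ge⟩
  refine Fin.strictMono_cons.2 ⟨fun j => ?_, hsnoc⟩
  induction j using Fin.lastCases with
  | last => simpa using hab
  | cast i => simpa using ha i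

lemma neg_one_pow_mul_prod_sub_pos {α : Type*} [CommRing α] [LinearOrder α]
    [IsStrictOrderedRing α] {n : ℕ} {x : Fin n → α} {t : α} {i : ℕ}
    (hlt : ∀ j : Fin n, (j : ℕ) < i → x j < t) (hgt : ∀ j : Fin n, i ≤ j → t < x j) :
    0 < (-1) ^ (n - i) * ∏ j, (t - x j) := by
  have hcard : #{j : Fin n | ¬(j : ℕ) < i} = n - i := by
    have := card_filter_add_card_filter_not (s := univ) (fun j : Fin n => (j : ℕ) < i)
    rw [Fin.card_filter_val_lt, card_univ, Fintype.card_fin] at this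
    omega
  rw [← prod_filter_mul_prod_filter_not univ (fun j : Fin n => (j : ℕ) < i), mul_left_comm,
    ← hcard, ← prod_neg]
  refine mul_pos (prod_pos fun j hj => ?_) (prod_pos fun j hj => ?_)
  · simpa using hlt j (mem_filter.1 hj).2
  · simpa using hgt j (not_lt.1 (mem_filter.1 hj).2)

def Interlacing {α : Type*} [Preorder α] {n : ℕ} (x : Fin n → α) (y : Fin (n + 1) → α) :
    Prop :=
  ∀ i : Fin n, y i.castSucc < x i ∧ x i < y i.succ

namespace Interlacing

variable {α : Type*} {n : ℕ} {x : Fin n → α} {y : Fin (n + 1) → α}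

lemma strictMono_right [Preorder α] (h : Interlacing x y) : StrictMono y :=
  Fin.strictMono_iff_lt_succ.2 fun i => (h i).1.trans (h i).2

lemma strictMono_left [Preorder α] (h : Interlacing x y) : StrictMono x := fun i j hij =>
  ((h i).2.trans_le (h.strictMono_right.monotone (Fin.succ_le_castSucc_iff.2 hij))).trans (h j).1

lemma neg_one_pow_mul_prod_sub_pos [CommRing α] [LinearOrder α] [IsStrictOrderedRing α]
    (h : Interlacing x y) (i : Fin (n + 1)) : 0 < (-1) ^ (n - i) * ∏ j, (y i - x j) := by
  refine _root_.neg_one_pow_mul_prod_sub_pos (fun j hj => ?_) (fun j hj => ?_)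
  · exact (h j).2.trans_le (h.strictMono_right.monotone (Fin.le_def.2 (by simpa using hj)))
  · exact (h.strictMono_right.monotone (Fin.le_def.2 (by simpa using hj))).trans_lt (h j).1

end Interlacing

namespace Polynomial

section CommRing

variable {R : Type*} [CommRing R] [Nontrivial R] {q r : R[X]}

lemma natDegree_C_mul_lt_natDegree_X_sub_C_mul (hq : q.Monic) (hr : r.natDegree ≤ q.natDegree)
    (c d : R) : (C d * r).natDegree < ((X - C c) * q).natDegree := by
  rw [(monic_X_sub_C c).natDegree_mul hq, natDegree_X_sub_C]
  exact (natDegree_C_mul_le d r).trans_lt (by omega)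

lemma Monic.X_sub_C_mul_sub_C_mul (hq : q.Monic) (hr : r.natDegree ≤ q.natDegree) (c d : R) :
    ((X - C c) * q - C d * r).Monic :=
  ((monic_X_sub_C c).mul hq).sub_of_left
    (degree_lt_degree (natDegree_C_mul_lt_natDegree_X_sub_C_mul hq hr c d))

lemma natDegree_X_sub_C_mul_sub_C_mul (hq : q.Monic) (hr : r.natDegree ≤ q.natDegree) (c d : R) :
    ((X - C c) * q - C d * r).natDegree = q.natDegree + 1 := by
  rw [natDegree_sub_eq_left_of_natDegree_lt (natDegree_C_mul_lt_natDegree_X_sub_C_mul hq hr c d),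
    (monic_X_sub_C c).natDegree_mul hq, natDegree_X_sub_C, add_comm]

end CommRing

lemma Monic.eq_prod_X_sub_C_of_injective {K : Type*} [Field K] {p : K[X]} {m : ℕ}
    (hp : p.Monic) (hdeg : p.natDegree = m) {z : Fin m → K} (hz : Function.Injective z)
    (hroot : ∀ i, p.IsRoot (z i)) : p = ∏ i, (X - C (z i)) :=
  eq_of_monic_of_dvd_of_natDegree_le (monic_prod_of_monic _ _ fun i _ => monic_X_sub_C (z i)) hp
    (Fintype.prod_dvd_of_coprime (pairwise_coprime_X_sub_C hz) fun i => dvd_iff_isRoot.2 (hroot i))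
    (by simp [hdeg])

section Real

variable {p : ℝ[X]}

lemma exists_isRoot_mem_Ioo_of_mul_neg {a b : ℝ} (hab : a < b)
    (h : p.eval a * p.eval b < 0) : ∃ c ∈ Set.Ioo a b, p.IsRoot c := by
  have hcont := p.continuous.continuousOn (s := Set.Icc a b)
  rcases mul_neg_iff.1 h with ⟨ha, hb⟩ | ⟨ha, hb⟩
  · exact intermediate_value_Ioo' hab.le hcont ⟨hb, ha⟩
  · exact intermediate_value_Ioo hab.le hcont ⟨ha, hb⟩

lemma exists_interlacing_roots_of_alternating {m : ℕ} {t : Fin (m + 1) → ℝ} (ht : StrictMono t)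
    (hsign : ∀ i : Fin (m + 1), 0 < (-1) ^ (m - i) * p.eval (t i)) :
    ∃ z : Fin m → ℝ, Interlacing z t ∧ ∀ i, p.IsRoot (z i) := by
  have hroot (i : Fin m) : ∃ c ∈ Set.Ioo (t i.castSucc) (t i.succ), p.IsRoot c := by
    refine exists_isRoot_mem_Ioo_of_mul_neg (ht i.castSucc_lt_succ) ?_
    have hpos := mul_pos (hsign i.castSucc) (hsign i.succ)
    rw [Fin.val_castSucc, Fin.val_succ, show m - i = m - (i + 1) + 1 by omega, pow_succ] at hpos
    have hsq : ((-1 : ℝ) ^ (m - (i + 1))) ^ 2 = 1 := by rw [← pow_mul, mul_comm, pow_mul]; simp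
    nlinarith
  choose z hz hzroot using hroot
  exact ⟨z, hz, hzroot⟩

lemma Monic.tendsto_atTop (hp : p.Monic) (hdeg : 0 < p.natDegree) :
    Tendsto p.eval atTop atTop :=
  p.tendsto_atTop_of_leadingCoeff_nonneg (natDegree_pos_iff_degree_pos.1 hdeg)
    (by simp [hp.leadingCoeff])

lemma Monic.tendsto_neg_one_pow_mul_atBot (hp : p.Monic) (hdeg : 0 < p.natDegree) :
    Tendsto (fun x => (-1) ^ p.natDegree * p.eval x) atBot atTop := by
  have h := (Asymptotics.IsEquivalent.refl (u := fun _ : ℝ => (-1 : ℝ) ^ p.natDegree)).mul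
    p.isEquivalent_atBot_lead
  refine h.symm.tendsto_atTop ?_
  convert (tendsto_pow_atTop (α := ℝ) hdeg.ne').comp tendsto_neg_atBot_atTop using 1
  ext x
  simp [hp.leadingCoeff, neg_pow x]

lemma Monic.exists_interlacing_roots {m : ℕ} (hp : p.Monic) (hdeg : p.natDegree = m + 1)
    {y : Fin m → ℝ} (hy : StrictMono y)
    (hsign : ∀ i : Fin m, 0 < (-1) ^ (m - i) * p.eval (y i)) :
    ∃ z : Fin (m + 1) → ℝ, Interlacing y z ∧ ∀ i, p.IsRoot (z i) := by
  have hdeg_pos : 0 < p.natDegree := by omega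
  obtain ⟨b, hb, hpb⟩ := ((eventually_all.2 fun i => eventually_gt_atTop (y i)).and
    ((hp.tendsto_atTop hdeg_pos).eventually_gt_atTop 0)).exists
  obtain ⟨a, ⟨hab, ha⟩, hpa⟩ := (((eventually_lt_atBot b).and
    (eventually_all.2 fun i => eventually_lt_atBot (y i))).and
    ((hp.tendsto_neg_one_pow_mul_atBot hdeg_pos).eventually_gt_atTop 0)).exists
  set t : Fin (m + 2) → ℝ := Fin.cons a (Fin.snoc y b)
  have htsign (k : Fin (m + 2)) : 0 < (-1) ^ (m + 1 - k) * p.eval (t k) := by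
    induction k using Fin.cases with
    | zero => simpa [t, hdeg] using hpa
    | succ j =>
      induction j using Fin.lastCases with
      | last => simpa [t] using hpb
      | cast i => simpa [t] using hsign i
  obtain ⟨z, hzt, hz⟩ :=
    exists_interlacing_roots_of_alternating (Fin.strictMono_cons_snoc hy ha hb hab) htsign
  refine ⟨z, fun i => ⟨by simpa [t] using (hzt i.castSucc).2, ?_⟩, hz⟩
  simpa [t, ← Fin.succ_castSucc] using (hzt i.succ).1

end Real

end Polynomial

def RootsInterlace (q r : ℝ[X]) (n : ℕ) : Prop :=
  ∃ (x : Fin n → ℝ) (y : Fin (n + 1) → ℝ),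
    Interlacing x y ∧ q = ∏ i, (X - C (x i)) ∧ r = ∏ i, (X - C (y i))

lemma RootsInterlace.X_sub_C_mul_sub_C_mul {q r : ℝ[X]} {n : ℕ} (h : RootsInterlace q r n)
    (c : ℝ) {d : ℝ} (hd : 0 < d) : RootsInterlace r ((X - C c) * r - C d * q) (n + 1) := by
  obtain ⟨x, y, hxy, rfl, rfl⟩ := h
  have hr : (∏ i, (X - C (y i))).Monic := monic_prod_of_monic _ _ fun i _ => monic_X_sub_C (y i)
  have hqr : (∏ i, (X - C (x i))).natDegree ≤ (∏ i, (X - C (y i))).natDegree := by simp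
  set s := (X - C c) * ∏ i, (X - C (y i)) - C d * ∏ i, (X - C (x i))
  have hs : s.Monic := hr.X_sub_C_mul_sub_C_mul hqr c d
  have hsdeg : s.natDegree = n + 1 + 1 := by
    rw [natDegree_X_sub_C_mul_sub_C_mul hr hqr, natDegree_finsetProd_X_sub_C_eq_card, card_univ,
      Fintype.card_fin]
  have hsign (i : Fin (n + 1)) : 0 < (-1) ^ (n + 1 - i) * s.eval (y i) := by
    have hyi : s.eval (y i) = -d * ∏ j, (y i - x j) := by
      simp [s, eval_prod, prod_eq_zero (mem_univ i)]
    rw [hyi, show n + 1 - i = n - i + 1 by omega, pow_succ,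
      show ∀ u P : ℝ, u * -1 * (-d * P) = d * (u * P) by intros; ring]
    exact mul_pos hd (hxy.neg_one_pow_mul_prod_sub_pos i)
  obtain ⟨z, hyz, hz⟩ := hs.exists_interlacing_roots hsdeg hxy.strictMono_right hsign
  exact ⟨y, z, hyz, rfl, hs.eq_prod_X_sub_C_of_injective hsdeg hyz.strictMono_right.injective hz⟩

theorem rootsInterlace_of_three_term_recurrence {p : ℕ → ℝ[X]} {a b : ℕ → ℝ}
    (hb : ∀ n, 0 < b n) (h0 : p 0 = 1) (h1 : p 1 = X - C (a 0))
    (hrec : ∀ n, p (n + 2) = (X - C (a (n + 1))) * p (n + 1) - C (b n) * p n) (n : ℕ) :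
    RootsInterlace (p n) (p (n + 1)) n := by
  induction n with
  | zero => exact ⟨Fin.elim0, fun _ => a 0, fun i => i.elim0, by simp [h0], by simp [h1]⟩
  | succ n ih => rw [hrec]; exact ih.X_sub_C_mul_sub_C_mul _ (hb n)

/-- Ĥe_k has degree k and exactly k real roots, all simple: its multiset of
    real roots has cardinality k and no duplicates. -/
theorem hhat_real_simple_roots (k : ℕ) :
    (Hhat k).natDegree = k ∧
    Multiset.card (Hhat k).roots = k ∧
    (Hhat k).roots.Nodup := by
  obtain ⟨x, y, hxy, hHhat, -⟩ := rootsInterlace_of_three_term_recurrence (p := Hhat) (a := 0)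
    (b := fun n => n + 3) (fun n => by positivity) rfl (by simp [Hhat]) (fun n => by simp [Hhat]) k
  have hroots : (Hhat k).roots = univ.val.map x := by
    rw [hHhat, roots_prod _ _ (monic_prod_of_monic _ _ fun i _ => monic_X_sub_C (x i)).ne_zero]
    simp
  exact ⟨by simp [hHhat], by simp [hroots], hroots ▸ univ.nodup.map hxy.strictMono_left.injective⟩
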